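/- arXiv:2006.14543 — 2 statements merged into one kernel-verified Lean document; each statement's English description precedes it below -/
import Mathlib

section
/- Let K be the 4×4 matrix with diagonal entries -1/2 and off-diagonal entries 1/2. Every vector p ∈ ℝ⁴ with p and K·p entrywise nonnegative is a nonnegative linear combination of the six vectors e_i + e_j with 1 ≤ i < j ≤ 4. -/
open Matrix

lemma sum_expand (c : Fin 4 → Fin 4 → ℝ) :
    (∑ i : Fin 4, ∑ j ∈ Finset.univ.filter (fun j => i < j),
        c i j • (Pi.single i (1 : ℝ) + Pi.single j (1 : ℝ)))
    = ![c 0 1 + c 0 2 + c 0 3, c 0 1 + c 1 2 + c 1 3,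
        c 0 2 + c 1 2 + c 2 3, c 0 3 + c 1 3 + c 2 3] := by
  have h0 : (Finset.univ.filter (fun j => (0:Fin 4) < j)) = {1, 2, 3} := by decide
  have h1 : (Finset.univ.filter (fun j => (1:Fin 4) < j)) = {2, 3} := by decide
  have h2 : (Finset.univ.filter (fun j => (2:Fin 4) < j)) = {3} := by decide
  have h3 : (Finset.univ.filter (fun j => (3:Fin 4) < j)) = ∅ := by decide
  rw [Fin.sum_univ_four, h0, h1, h2, h3]
  funext k
  fin_cases k <;>
    simp [Finset.sum_insert, Pi.single_apply] <;> ring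

set_option maxHeartbeats 4000000 in
lemma helper (p : Fin 4 → ℝ) (h0 : ∀ i, 0 ≤ p i) (a b c d : Fin 4)
    (hab : a ≠ b) (hac : a ≠ c) (had : a ≠ d) (hbc : b ≠ c) (hbd : b ≠ d) (hcd : c ≠ d)
    (h1 : p b ≤ p a) (h2 : p c ≤ p a) (h3 : p d ≤ p b) (h4 : p d ≤ p c)
    (h5 : p a ≤ p b + p c + p d) :
    ∃ c' : Fin 4 → Fin 4 → ℝ, (∀ i j, 0 ≤ c' i j) ∧
      p = ∑ i : Fin 4, ∑ j ∈ Finset.univ.filter (fun j => i < j),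
        c' i j • (Pi.single i (1 : ℝ) + Pi.single j (1 : ℝ)) := by
  refine ⟨fun i j =>
    if (i=a∧j=b)∨(i=b∧j=a) then (p a + p b - p c - p d)/2
    else if (i=a∧j=c)∨(i=c∧j=a) then (p a - p b + p c - p d)/2
    else if (i=a∧j=d)∨(i=d∧j=a) then p d
    else if (i=b∧j=c)∨(i=c∧j=b) then (p b + p c + p d - p a)/2
    else 0, ?_, ?_⟩
  · intro i j; dsimp only; split_ifs <;> first | linarith [h0 d] | rfl
  · rw [sum_expand]
    fin_cases a <;> fin_cases b <;> fin_cases c <;> fin_cases d <;>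
      first
      | omega
      | (funext k; fin_cases k <;> simp (config := { decide := true }) <;> ring)

/-- The matrix `K` with diagonal entries `-1/2` and off-diagonal entries `1/2`. -/
noncomputable def K4 : Matrix (Fin 4) (Fin 4) ℝ := fun i j => if i = j then -(1/2) else 1/2

set_option maxHeartbeats 4000000 in
theorem stmt7 (p : Fin 4 → ℝ) (hp : ∀ i, 0 ≤ p i) (hKp : ∀ i, 0 ≤ K4.mulVec p i) :
    ∃ c : Fin 4 → Fin 4 → ℝ, (∀ i j, 0 ≤ c i j) ∧
      p = ∑ i : Fin 4, ∑ j ∈ Finset.univ.filter (fun j => i < j),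
        c i j • (Pi.single i (1 : ℝ) + Pi.single j (1 : ℝ)) := by
  have k0 : p 0 ≤ p 1 + p 2 + p 3 := by
    have := hKp 0; simp [K4, mulVec, dotProduct, Fin.sum_univ_four] at this; linarith
  have k1 : p 1 ≤ p 0 + p 2 + p 3 := by
    have := hKp 1; simp [K4, mulVec, dotProduct, Fin.sum_univ_four] at this; linarith
  have k2 : p 2 ≤ p 0 + p 1 + p 3 := by
    have := hKp 2; simp [K4, mulVec, dotProduct, Fin.sum_univ_four] at this; linarith
  have k3 : p 3 ≤ p 0 + p 1 + p 2 := by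
    have := hKp 3; simp [K4, mulVec, dotProduct, Fin.sum_univ_four] at this; linarith
  rcases le_total (p 0) (p 1) with h01 | h01 <;>
  rcases le_total (p 0) (p 2) with h02 | h02 <;>
  rcases le_total (p 0) (p 3) with h03 | h03 <;>
  rcases le_total (p 1) (p 2) with h12 | h12 <;>
  rcases le_total (p 1) (p 3) with h13 | h13 <;>
  rcases le_total (p 2) (p 3) with h23 | h23 <;>
    first
    | exact helper p hp 0 2 3 1 (by decide) (by decide) (by decide) (by decide) (by decide) (by decide) (by linarith) (by linarith) (by linarith) (by linarith) (by linarith)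
    | exact helper p hp 0 1 3 2 (by decide) (by decide) (by decide) (by decide) (by decide) (by decide) (by linarith) (by linarith) (by linarith) (by linarith) (by linarith)
    | exact helper p hp 0 1 2 3 (by decide) (by decide) (by decide) (by decide) (by decide) (by decide) (by linarith) (by linarith) (by linarith) (by linarith) (by linarith)
    | exact helper p hp 1 2 3 0 (by decide) (by decide) (by decide) (by decide) (by decide) (by decide) (by linarith) (by linarith) (by linarith) (by linarith) (by linarith)
    | exact helper p hp 1 0 3 2 (by decide) (by decide) (by decide) (by decide) (by decide) (by decide) (by linarith) (by linarith) (by linarith) (by linarith) (by linarith)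
    | exact helper p hp 1 0 2 3 (by decide) (by decide) (by decide) (by decide) (by decide) (by decide) (by linarith) (by linarith) (by linarith) (by linarith) (by linarith)
    | exact helper p hp 2 1 3 0 (by decide) (by decide) (by decide) (by decide) (by decide) (by decide) (by linarith) (by linarith) (by linarith) (by linarith) (by linarith)
    | exact helper p hp 2 0 3 1 (by decide) (by decide) (by decide) (by decide) (by decide) (by decide) (by linarith) (by linarith) (by linarith) (by linarith) (by linarith)
    | exact helper p hp 2 0 1 3 (by decide) (by decide) (by decide) (by decide) (by decide) (by decide) (by linarith) (by linarith) (by linarith) (by linarith) (by linarith)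
    | exact helper p hp 3 1 2 0 (by decide) (by decide) (by decide) (by decide) (by decide) (by decide) (by linarith) (by linarith) (by linarith) (by linarith) (by linarith)
    | exact helper p hp 3 0 2 1 (by decide) (by decide) (by decide) (by decide) (by decide) (by decide) (by linarith) (by linarith) (by linarith) (by linarith) (by linarith)
    | exact helper p hp 3 0 1 2 (by decide) (by decide) (by decide) (by decide) (by decide) (by decide) (by linarith) (by linarith) (by linarith) (by linarith) (by linarith)
end

section
/- Let K be the 4×4 matrix with diagonal entries -1/2 and off-diagonal entries 1/2, and suppose (P, Q) is a pair of entrywise nonnegative 4×4 real matrices with Q = K·P·K such that P_{ij} = 0 for all i ∈ {1,2,3} and j ∈ {1,2}. Then Q_{ij} = 0 for all i ∈ {1,2,3,4} and j ∈ {3,4}, and P_{4,1} = P_{4,2} = 0. -/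
set_option maxHeartbeats 1000000


open Matrix

theorem stmt17 (P Q : Matrix (Fin 4) (Fin 4) ℝ)
    (hP : ∀ i j, 0 ≤ P i j) (hQ : ∀ i j, 0 ≤ Q i j) (hQP : Q = K4 * P * K4)
    (hzero : ∀ i ∈ ({0, 1, 2} : Set (Fin 4)), ∀ j ∈ ({0, 1} : Set (Fin 4)), P i j = 0) :
    (∀ i : Fin 4, ∀ j ∈ ({2, 3} : Set (Fin 4)), Q i j = 0) ∧
    P 3 0 = 0 ∧ P 3 1 = 0 := by
  have z00 : P 0 0 = 0 := hzero 0 (by simp) 0 (by simp)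
  have z01 : P 0 1 = 0 := hzero 0 (by simp) 1 (by simp)
  have z10 : P 1 0 = 0 := hzero 1 (by simp) 0 (by simp)
  have z11 : P 1 1 = 0 := hzero 1 (by simp) 1 (by simp)
  have z20 : P 2 0 = 0 := hzero 2 (by simp) 0 (by simp)
  have z21 : P 2 1 = 0 := hzero 2 (by simp) 1 (by simp)
  subst hQP
  have key : ∀ i j, (K4 * P * K4) i j =
      (K4 i 0 * P 0 0 + K4 i 1 * P 1 0 + K4 i 2 * P 2 0 + K4 i 3 * P 3 0) * K4 0 j +
      (K4 i 0 * P 0 1 + K4 i 1 * P 1 1 + K4 i 2 * P 2 1 + K4 i 3 * P 3 1) * K4 1 j +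
      (K4 i 0 * P 0 2 + K4 i 1 * P 1 2 + K4 i 2 * P 2 2 + K4 i 3 * P 3 2) * K4 2 j +
      (K4 i 0 * P 0 3 + K4 i 1 * P 1 3 + K4 i 2 * P 2 3 + K4 i 3 * P 3 3) * K4 3 j := by
    intro i j
    simp [Matrix.mul_apply, Fin.sum_univ_four]
  have h32 := hQ 3 2; have h33 := hQ 3 3
  rw [key] at h32 h33
  norm_num (config := { decide := true }) [K4, z00, z01, z10, z11, z20, z21] at h32 h33
  have ha : P 3 0 = 0 := by linarith [hP 3 0, hP 3 1]
  have hb : P 3 1 = 0 := by linarith [hP 3 0, hP 3 1]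
  refine ⟨?_, ha, hb⟩
  intro i j hj
  have hi2 := hQ i 2; have hi3 := hQ i 3
  rw [key] at hi2 hi3
  simp only [Set.mem_insert_iff, Set.mem_singleton_iff] at hj
  rcases hj with rfl | rfl <;> rw [key] <;> fin_cases i <;>
    norm_num (config := { decide := true }) [K4, z00, z01, z10, z11, z20, z21, ha, hb] at hi2 hi3 ⊢ <;>
    linarith
end
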